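/- (Core of Property 3, dominant late job.) Suppose n ≥ 2 and there is a job j such that max over k ≠ j of r⁺ k + ∑ over k ≠ j of ( max over machines i of p i k ) ≤ r⁻ j. Then for every scenario r ∈ R the optimal makespan equals C*(r) = r j + min over machines i of p i j, and there exists a schedule x (placing j alone, last, on a machine minimizing p i j) whose worst-case regret is zero: Z(x) = 0. -/

import Mathlib

open Finset

/-- A schedule assigns to each machine a finite sequence of jobs such that
every job occurs exactly once among all the sequences. -/
structure Schedule (m n : ℕ) where
  seq : Fin m → List (Fin n)
  valid : ∀ j : Fin n, (∑ i : Fin m, (seq i).count j) = 1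

variable {m n : ℕ}

/-- Completion time after processing the list `L` of jobs on a machine with
processing times `q` and release dates `r`; recursively `C₀ = 0`,
`C_k = q j_k + max C_{k-1} (r j_k)`. -/
def mComp (q r : Fin n → ℝ) (L : List (Fin n)) : ℝ :=
  L.foldl (fun c j => q j + max c (r j)) 0

/-- Makespan of the schedule `x` under the release dates `r`. -/
noncomputable def Cmax (p : Fin m → Fin n → ℝ) (x : Schedule m n) (r : Fin n → ℝ) : ℝ :=
  ⨆ i : Fin m, mComp (p i) r (x.seq i)

/-- Optimal makespan `C*(r)`: the minimum of `Cmax` over all schedules. -/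
noncomputable def Cstar (p : Fin m → Fin n → ℝ) (r : Fin n → ℝ) : ℝ :=
  ⨅ x : Schedule m n, Cmax p x r

/-- Regret of schedule `x` under scenario `r`. -/
noncomputable def regret (p : Fin m → Fin n → ℝ) (x : Schedule m n) (r : Fin n → ℝ) : ℝ :=
  Cmax p x r - Cstar p r

/-- The scenario box determined by the interval bounds. -/
def box (rlo rhi : Fin n → ℝ) : Set (Fin n → ℝ) :=
  {r | ∀ j, rlo j ≤ r j ∧ r j ≤ rhi j}

/-- Worst-case regret `Z(x)`. -/
noncomputable def Zreg (p : Fin m → Fin n → ℝ) (x : Schedule m n) (rlo rhi : Fin n → ℝ) : ℝ :=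
  sSup ((fun r => regret p x r) '' box rlo rhi)

/-- Extreme scenario `r̄^j`. -/
def extSc (rlo rhi : Fin n → ℝ) (j : Fin n) : Fin n → ℝ :=
  Function.update rlo j (rhi j)

/-- The set `H(x)` of jobs whose release interval is covered by the
processing of their predecessors (positions are 0-indexed: job at position
`k ≥ 1` has predecessors `(x.seq i).take k`). -/
def Hset (p : Fin m → Fin n → ℝ) (rlo rhi : Fin n → ℝ) (x : Schedule m n) : Set (Fin n) :=
  {j | ∃ i : Fin m, ∃ k : ℕ, 1 ≤ k ∧ (x.seq i)[k]? = some j ∧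
    rhi j ≤ mComp (p i) rlo ((x.seq i).take k)}

/-- Lower bound `LB₁(r) = max_j (r j + min_i p i j)`. -/
noncomputable def LB1 (p : Fin m → Fin n → ℝ) (r : Fin n → ℝ) : ℝ :=
  ⨆ j : Fin n, (r j + ⨅ i : Fin m, p i j)

/-- Lower bound `LB(r) = min_j r j + m⁻¹ ∑_j min_i p i j`. -/
noncomputable def LB0 (p : Fin m → Fin n → ℝ) (r : Fin n → ℝ) : ℝ :=
  (⨅ j : Fin n, r j) + (m : ℝ)⁻¹ * ∑ j : Fin n, ⨅ i : Fin m, p i j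

/-- `E_j(r)`: the jobs unavailable before `j`. -/
noncomputable def Ej (r : Fin n → ℝ) (j : Fin n) : Finset (Fin n) :=
  Finset.univ.filter fun t => r j ≤ r t

lemma Ej_nonempty (r : Fin n → ℝ) (j : Fin n) : (Ej r j).Nonempty :=
  ⟨j, by simp [Ej]⟩

/-- `W_j(E_j(r), p)` from the paper. -/
noncomputable def W2 (p : Fin m → Fin n → ℝ) (r : Fin n → ℝ) (j : Fin n) : ℝ :=
  (Ej r j).inf' (Ej_nonempty r j) r + (m : ℝ)⁻¹ * ∑ t ∈ Ej r j, ⨅ i : Fin m, p i t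

/-- Lower bound `LB₂(r)`. -/
noncomputable def LB2 (p : Fin m → Fin n → ℝ) (r : Fin n → ℝ) : ℝ :=
  ⨆ j : Fin n, W2 p r j

/-- `W̃_j(E_j(r), p_w)` from the paper, with `λ_j = ⌈|E_j(r)|/m⌉`. -/
noncomputable def W3 (p : Fin m → Fin n → ℝ) (r : Fin n → ℝ) (j : Fin n) : ℝ :=
  (Ej r j).inf' (Ej_nonempty r j) r +
    (⌈((Ej r j).card : ℝ) / (m : ℝ)⌉ : ℝ) *
      (Ej r j).inf' (Ej_nonempty r j) (fun t => ⨅ i : Fin m, p i t)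

/-- Lower bound `LB₃(r)`. -/
noncomputable def LB3 (p : Fin m → Fin n → ℝ) (r : Fin n → ℝ) : ℝ :=
  ⨆ j : Fin n, W3 p r j

/-- The combined lower bound `LB(r̄) = max {LB₁, LB₂, LB₃}`. -/
noncomputable def LBall (p : Fin m → Fin n → ℝ) (r : Fin n → ℝ) : ℝ :=
  max (LB1 p r) (max (LB2 p r) (LB3 p r))

/-!
Every schedule processes job `j` on some machine `i`, which cannot finish it before
`r j + p i j ≥ r j + min_i p i j`. Conversely, on a machine `i₀` minimising `p i j`, all other
jobs, run first, are finished by `max_{k ≠ j} r⁺ k + ∑_{k ≠ j} p i₀ k ≤ r⁻ j ≤ r j`, so `j`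
starts exactly at its release date and this schedule attains the lower bound in every scenario.
Its regret is therefore identically zero.
-/

section Completion

variable {q r : Fin n → ℝ}

@[simp]
lemma mComp_nil : mComp q r [] = 0 := rfl

lemma mComp_append_singleton (L : List (Fin n)) (k : Fin n) :
    mComp q r (L ++ [k]) = q k + max (mComp q r L) (r k) := by
  simp only [mComp, List.foldl_append, List.foldl_cons, List.foldl_nil]

variable (hq : ∀ k, 0 ≤ q k)
include hq

lemma mComp_le_append_singleton (L : List (Fin n)) (k : Fin n) :
    mComp q r L ≤ mComp q r (L ++ [k]) := by
  rw [mComp_append_singleton]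
  linarith [le_max_left (mComp q r L) (r k), hq k]

lemma mComp_nonneg (L : List (Fin n)) : 0 ≤ mComp q r L := by
  induction L using List.reverseRecOn with
  | nil => rfl
  | append_singleton L k ih => exact ih.trans (mComp_le_append_singleton hq L k)

lemma mComp_le_append (L M : List (Fin n)) : mComp q r L ≤ mComp q r (L ++ M) := by
  induction M using List.reverseRecOn with
  | nil => simp
  | append_singleton M k ih =>
    rw [← List.append_assoc]
    exact ih.trans (mComp_le_append_singleton hq _ k)

lemma add_le_mComp_of_mem {L : List (Fin n)} {j : Fin n} (hj : j ∈ L) :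
    r j + q j ≤ mComp q r L := by
  obtain ⟨s, t, rfl⟩ := List.append_of_mem hj
  calc r j + q j ≤ q j + max (mComp q r s) (r j) := by linarith [le_max_right (mComp q r s) (r j)]
    _ = mComp q r (s ++ [j]) := (mComp_append_singleton s j).symm
    _ ≤ mComp q r (s ++ j :: t) := by
      simpa only [List.append_assoc, List.singleton_append] using mComp_le_append hq (s ++ [j]) t

lemma mComp_le_add_sum {A : ℝ} (hA : 0 ≤ A) {L : List (Fin n)} (hL : ∀ k ∈ L, r k ≤ A) :
    mComp q r L ≤ A + (L.map q).sum := by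
  induction L using List.reverseRecOn with
  | nil => simpa using hA
  | append_singleton L k ih =>
    have hLk : ∀ k' ∈ L, r k' ≤ A := fun k' hk' => hL k' (List.mem_append_left _ hk')
    have hsum : 0 ≤ (L.map q).sum := List.sum_nonneg (by simpa using fun k' _ => hq k')
    have hmax : max (mComp q r L) (r k) ≤ A + (L.map q).sum :=
      max_le (ih hLk) (by linarith [hL k (by simp)])
    rw [mComp_append_singleton, List.map_append, List.sum_append]
    simp only [List.map_cons, List.map_nil, List.sum_cons, List.sum_nil]
    linarith

end Completion

namespace Schedule

lemma exists_mem_seq (x : Schedule m n) (j : Fin n) : ∃ i, j ∈ x.seq i := by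
  by_contra! h
  have := x.valid j
  rw [Finset.sum_eq_zero fun i _ => List.count_eq_zero_of_not_mem (h i)] at this
  exact zero_ne_one this

def onMachine (i : Fin m) (L : List (Fin n)) (hL : ∀ k, L.count k = 1) : Schedule m n where
  seq i' := if i' = i then L else []
  valid k := by
    rw [Fintype.sum_eq_single i fun i' hi' => by simp [hi'], if_pos rfl, hL]

end Schedule

lemma count_toList_erase_append_singleton {α : Type*} [Fintype α] [DecidableEq α] (j k : α) :
    ((Finset.univ.erase j).toList ++ [j]).count k = 1 := by
  rw [List.count_append]
  by_cases hk : k = j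
  · subst hk
    simp [List.count_eq_zero_of_not_mem]
  · rw [List.count_eq_one_of_mem (Finset.nodup_toList _) (by simp [hk])]
    simp [Ne.symm hk]

section Makespan

variable {p : Fin m → Fin n → ℝ}

lemma mComp_le_Cmax (x : Schedule m n) (r : Fin n → ℝ) (i : Fin m) :
    mComp (p i) r (x.seq i) ≤ Cmax p x r :=
  le_ciSup (f := fun i => mComp (p i) r (x.seq i)) (Finite.bddAbove_range _) i

lemma Cmax_onMachine (hp : ∀ i k, 0 ≤ p i k) (i : Fin m) (L : List (Fin n))
    (hL : ∀ k, L.count k = 1) (r : Fin n → ℝ) :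
    Cmax p (Schedule.onMachine i L hL) r = mComp (p i) r L := by
  have : Nonempty (Fin m) := ⟨i⟩
  have hseq : (Schedule.onMachine i L hL).seq i = L := if_pos rfl
  have hle := mComp_le_Cmax (p := p) (Schedule.onMachine i L hL) r i
  rw [hseq] at hle
  refine le_antisymm (ciSup_le fun i' => ?_) hle
  by_cases hi' : i' = i
  · subst hi'
    rw [hseq]
  · simp only [Schedule.onMachine, if_neg hi', mComp_nil]
    exact mComp_nonneg (hp i) L

lemma add_iInf_le_Cmax (hp : ∀ i k, 0 ≤ p i k) (x : Schedule m n) (r : Fin n → ℝ) (j : Fin n) :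
    r j + ⨅ i, p i j ≤ Cmax p x r := by
  obtain ⟨i, hi⟩ := x.exists_mem_seq j
  calc r j + ⨅ i, p i j ≤ r j + p i j := by gcongr; exact ciInf_le (Finite.bddBelow_range _) i
    _ ≤ mComp (p i) r (x.seq i) := add_le_mComp_of_mem (hp i) hi
    _ ≤ Cmax p x r := mComp_le_Cmax x r i

lemma Cstar_eq_of_Cmax_eq {r : Fin n → ℝ} {b : ℝ} (hlb : ∀ y : Schedule m n, b ≤ Cmax p y r)
    (x : Schedule m n) (hx : Cmax p x r = b) : Cstar p r = b :=
  have : Nonempty (Schedule m n) := ⟨x⟩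
  le_antisymm (hx ▸ ciInf_le ⟨b, Set.forall_mem_range.2 hlb⟩ x) (le_ciInf hlb)

lemma Zreg_eq_zero {x : Schedule m n} {rlo rhi : Fin n → ℝ} (hbox : (box rlo rhi).Nonempty)
    (hx : ∀ r ∈ box rlo rhi, regret p x r = 0) : Zreg p x rlo rhi = 0 := by
  rw [Zreg, Set.image_congr hx, hbox.image_const, csSup_singleton]

lemma mComp_toList_erase_le {rlo rhi r : Fin n → ℝ} (hp : ∀ i k, 0 ≤ p i k)
    (hrhi : ∀ k, 0 ≤ rhi k) {j : Fin n}
    (hdom : (⨆ k : {k : Fin n // k ≠ j}, rhi (k : Fin n)) +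
        ∑ k ∈ Finset.univ.erase j, ⨆ i : Fin m, p i k ≤ rlo j)
    (hr : r ∈ box rlo rhi) (i : Fin m) :
    mComp (p i) r (Finset.univ.erase j).toList ≤ r j := by
  have hA : ∀ k ∈ (Finset.univ.erase j).toList, r k ≤ ⨆ k : {k : Fin n // k ≠ j}, rhi k :=
    fun k hk => (hr k).2.trans <| le_ciSup (f := fun k : {k : Fin n // k ≠ j} => rhi k)
      (Finite.bddAbove_range _) ⟨k, by simpa using hk⟩
  have hsum : ∑ k ∈ Finset.univ.erase j, p i k ≤ ∑ k ∈ Finset.univ.erase j, ⨆ i, p i k :=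
    Finset.sum_le_sum fun k _ => le_ciSup (f := fun i => p i k) (Finite.bddAbove_range _) i
  have := mComp_le_add_sum (hp i) (Real.iSup_nonneg fun k : {k : Fin n // k ≠ j} => hrhi k) hA
  rw [Finset.sum_map_toList] at this
  linarith [(hr j).1]

end Makespan

theorem dominant_late_job_general {m n : ℕ} (hm : 0 < m)
    (p : Fin m → Fin n → ℝ) (hp : ∀ i j, 0 < p i j)
    (rlo rhi : Fin n → ℝ) (hlo : ∀ j, 0 ≤ rlo j) (hlt : ∀ j, rlo j < rhi j)
    (j : Fin n)
    (hdom : (⨆ k : {k : Fin n // k ≠ j}, rhi (k : Fin n)) +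
        ∑ k ∈ Finset.univ.erase j, ⨆ i : Fin m, p i k ≤ rlo j) :
    (∀ r ∈ box rlo rhi, Cstar p r = r j + ⨅ i : Fin m, p i j) ∧
      ∃ x : Schedule m n, Zreg p x rlo rhi = 0 := by
  have : Nonempty (Fin m) := ⟨⟨0, hm⟩⟩
  obtain ⟨i₀, hi₀⟩ := exists_eq_ciInf_of_finite (f := fun i => p i j)
  have hp' : ∀ i k, 0 ≤ p i k := fun i k => (hp i k).le
  have hrhi : ∀ k, 0 ≤ rhi k := fun k => (hlo k).trans (hlt k).le
  let x := Schedule.onMachine i₀ _ (count_toList_erase_append_singleton j)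
  have hx : ∀ r ∈ box rlo rhi, Cmax p x r = r j + ⨅ i, p i j := by
    intro r hr
    rw [Cmax_onMachine hp', mComp_append_singleton,
      max_eq_right (mComp_toList_erase_le hp' hrhi hdom hr i₀), hi₀, add_comm]
  have hstar : ∀ r ∈ box rlo rhi, Cstar p r = r j + ⨅ i, p i j := fun r hr =>
    Cstar_eq_of_Cmax_eq (fun y => add_iInf_le_Cmax hp' y r j) x (hx r hr)
  refine ⟨hstar, x, Zreg_eq_zero ⟨rlo, fun k => ⟨le_rfl, (hlt k).le⟩⟩ fun r hr => ?_⟩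
  rw [regret, hx r hr, hstar r hr, sub_self]

/-- core of Property 3, dominant late job: if
`max_{k ≠ j} r⁺ k + ∑_{k ≠ j} max_i p i k ≤ r⁻ j`, then under every
scenario the optimal makespan is `r j + min_i p i j`, and some schedule has
worst-case regret zero. -/
theorem dominant_late_job {m n : ℕ} (hm : 0 < m) (hn : 2 ≤ n)
    (p : Fin m → Fin n → ℝ) (hp : ∀ i j, 0 < p i j)
    (rlo rhi : Fin n → ℝ) (hlo : ∀ j, 0 ≤ rlo j) (hlt : ∀ j, rlo j < rhi j)
    (j : Fin n)
    (hdom : (⨆ k : {k : Fin n // k ≠ j}, rhi (k : Fin n)) +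
        ∑ k ∈ Finset.univ.erase j, ⨆ i : Fin m, p i k ≤ rlo j) :
    (∀ r ∈ box rlo rhi, Cstar p r = r j + ⨅ i : Fin m, p i j) ∧
      ∃ x : Schedule m n, Zreg p x rlo rhi = 0 :=
  dominant_late_job_general hm p hp rlo rhi hlo hlt j hdom
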